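/- If u, v : ℝ × ℝ → ℝ satisfy (1/c₀²)u_tt = u_xx − k·∂/∂x[(1+u_x)/√((1+u_x)²+v_x²)] with u ≡ 0, k ≠ 0, and 1 + u_x = 1 > 0, then ∂/∂x[1/√(1+v_x²)] = 0, i.e., v_x·v_xx = 0 wherever derivatives exist; in particular, if v_x ≠ 0 on an interval then v_xx = 0 there. -/

import Mathlib

/-! With `u ≡ 0` the `u`-equation reduces to `k · ∂ₓ[(1 + v_x²)^(-1/2)] = 0`, so that derivative
vanishes since `k ≠ 0`. By the chain rule it equals `-v_x v_xx / (1 + v_x²)^(3/2)`, whose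
denominator is positive; hence `v_x v_xx = 0`, and `v_xx = 0` wherever `v_x ≠ 0`. -/

open Real

theorem HasDerivAt.one_div_sqrt_one_add_sq {g : ℝ → ℝ} {g' x : ℝ} (hg : HasDerivAt g g' x) :
    HasDerivAt (fun y => 1 / √(1 + g y ^ 2)) (-(g x * g') / √(1 + g x ^ 2) ^ 3) x := by
  have hpos : 0 < 1 + g x ^ 2 := by positivity
  have hne : √(1 + g x ^ 2) ≠ 0 := (sqrt_pos.2 hpos).ne'
  have hsqrt : HasDerivAt (fun y => √(1 + g y ^ 2)) (g x * g' / √(1 + g x ^ 2)) x := by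
    refine (((hg.pow 2).const_add 1).sqrt hpos.ne').congr_deriv ?_
    simp only [Pi.pow_apply]
    field_simp
    ring
  simp only [one_div]
  refine (hsqrt.inv hne).congr_deriv ?_
  field_simp

theorem mul_deriv_eq_zero_of_deriv_one_div_sqrt_one_add_sq_eq_zero {g : ℝ → ℝ} {x : ℝ}
    (hg : DifferentiableAt ℝ g x) (h : deriv (fun y => 1 / √(1 + g y ^ 2)) x = 0) :
    g x * deriv g x = 0 := by
  rw [hg.hasDerivAt.one_div_sqrt_one_add_sq.deriv, div_eq_zero_iff, neg_eq_zero] at h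
  refine h.resolve_right (pow_ne_zero 3 (sqrt_pos.2 ?_).ne')
  positivity

theorem pure_transverse_forces_piecewise_straight_general
    (c₀ k : ℝ) (hk : k ≠ 0)
    (v : ℝ → ℝ → ℝ) (hv : ∀ t, ContDiff ℝ 2 (fun x => v x t))
    -- the `u`-equation with `u ≡ 0`:
    -- `(1/c₀²)·0 = 0 - k·∂/∂x[(1+0)/√((1+0)²+v_x²)]`
    (hpde : ∀ x t,
      (1 / c₀ ^ 2) * 0
        = 0 - k * deriv (fun x' => 1 / Real.sqrt (1 + (deriv (fun z => v z t) x') ^ 2)) x) :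
    (∀ x t, deriv (fun x' => 1 / Real.sqrt (1 + (deriv (fun z => v z t) x') ^ 2)) x = 0)
    ∧ (∀ x t, deriv (fun z => v z t) x * deriv (deriv (fun z => v z t)) x = 0)
    ∧ (∀ t a b, (∀ x ∈ Set.Ioo a b, deriv (fun z => v z t) x ≠ 0) →
        ∀ x ∈ Set.Ioo a b, deriv (deriv (fun z => v z t)) x = 0) := by
  have hflux : ∀ x t,
      deriv (fun x' => 1 / √(1 + (deriv (fun z => v z t) x') ^ 2)) x = 0 := fun x t => by
    have h := hpde x t
    rw [mul_zero, zero_sub, zero_eq_neg] at h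
    exact (mul_eq_zero.1 h).resolve_left hk
  have hslope : ∀ x t, deriv (fun z => v z t) x * deriv (deriv (fun z => v z t)) x = 0 :=
    fun x t => mul_deriv_eq_zero_of_deriv_one_div_sqrt_one_add_sq_eq_zero
      ((hv t).differentiable_deriv_two x) (hflux x t)
  exact ⟨hflux, hslope, fun t a b hne x hx => (mul_eq_zero.1 (hslope x t)).resolve_left (hne x hx)⟩

/-- Purely transverse motion (`u ≡ 0`) in the 2D string model with `k ≠ 0` forces
`∂/∂x [1/√(1+v_x²)] = 0`, hence `v_x v_xx = 0`, and in particular `v_xx = 0` on any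
interval where `v_x ≠ 0`. -/
theorem pure_transverse_forces_piecewise_straight
    (c₀ k : ℝ) (hc₀ : 0 < c₀) (hk : k ≠ 0)
    (v : ℝ → ℝ → ℝ) (hv : ∀ t, ContDiff ℝ 2 (fun x => v x t))
    -- the `u`-equation with `u ≡ 0`:
    -- `(1/c₀²)·0 = 0 - k·∂/∂x[(1+0)/√((1+0)²+v_x²)]`
    (hpde : ∀ x t,
      (1 / c₀ ^ 2) * 0
        = 0 - k * deriv (fun x' => 1 / Real.sqrt (1 + (deriv (fun z => v z t) x') ^ 2)) x) :
    (∀ x t, deriv (fun x' => 1 / Real.sqrt (1 + (deriv (fun z => v z t) x') ^ 2)) x = 0)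
    ∧ (∀ x t, deriv (fun z => v z t) x * deriv (deriv (fun z => v z t)) x = 0)
    ∧ (∀ t a b, (∀ x ∈ Set.Ioo a b, deriv (fun z => v z t) x ≠ 0) →
        ∀ x ∈ Set.Ioo a b, deriv (deriv (fun z => v z t)) x = 0) :=
  pure_transverse_forces_piecewise_straight_general c₀ k hk v hv hpde
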